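/- Consider the two-player one-dimensional Battling Influencers Game with action set 𝒳 = [a,b] (a < b), receiver x̂ = (x_1 + x_2)/2, and targets satisfying t_1 < t_2, a < t_2, and t_2 < (a+b)/2, where player i's loss is ℓ_i(x_1,x_2) = ((x_1+x_2)/2 − t_i)². Then (x_1, x_2) = (a, 2t_2 − a) is the unique pure Nash equilibrium; at this equilibrium the receiver's point equals player 2's target: (x_1 + x_2)/2 = t_2. -/

import Mathlib

noncomputable section

/-- Player `i`'s loss in the two-player one-dimensional Battling Influencers
Game with receiver `x̂ = (x₁ + x₂)/2` and target `t`: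
`ℓ(x₁, x₂) = ((x₁ + x₂)/2 − t)²`. -/
def loss1D (t x1 x2 : ℝ) : ℝ := ((x1 + x2) / 2 - t) ^ 2

/-- `(x₁, x₂)` is a pure Nash equilibrium of the two-player one-dimensional
Battling Influencers Game on `𝒳 = [a, b]` with targets `t₁, t₂`. -/
def IsPureNE1D (a b t1 t2 x1 x2 : ℝ) : Prop :=
  x1 ∈ Set.Icc a b ∧ x2 ∈ Set.Icc a b ∧
    (∀ y ∈ Set.Icc a b, loss1D t1 x1 x2 ≤ loss1D t1 y x2) ∧
    (∀ y ∈ Set.Icc a b, loss1D t2 x1 x2 ≤ loss1D t2 x1 y)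

/-!
A best response either puts the receiver exactly on the player's target or sits at an end of
`[a, b]`: if the receiver overshoots the target, moving down would help unless the action is
already `a`, and symmetrically for `b`. At an equilibrium the receiver cannot lie below `t₂`,
since then player 2 plays `b` and the receiver is at least `(a + b)/2 > t₂`; nor above `t₂`,
since then it also lies above `t₁`, both players play `a` and the receiver is `a < t₂`.
So the receiver is at `t₂ > t₁`, which forces player 1 to `a` and player 2 to `2t₂ − a`.
-/

open Set

lemma loss1D_comm (t x1 x2 : ℝ) : loss1D t x1 x2 = loss1D t x2 x1 := by
  rw [loss1D, loss1D, add_comm]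

lemma loss1D_le_loss1D_of_le {t x y c : ℝ} (ht : t ≤ (x + c) / 2) (hxy : x ≤ y) :
    loss1D t x c ≤ loss1D t y c := by
  unfold loss1D
  gcongr

section BestResponse

variable {a b t c x : ℝ}

lemma eq_left_of_isMinOn_loss1D_of_lt (hx : x ∈ Icc a b)
    (hmin : IsMinOn (loss1D t · c) (Icc a b) x) (ht : t < (x + c) / 2) : x = a := by
  by_contra hxa
  have hax : a < x := lt_of_le_of_ne hx.1 (Ne.symm hxa)
  -- the action below `x` that brings the receiver closest to `t`
  have hbetter : loss1D t x c ≤ loss1D t (max a (2 * t - c)) c :=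
    isMinOn_iff.1 hmin _ ⟨le_max_left _ _, max_le (by linarith [hx.2]) (by linarith [hx.2])⟩
  unfold loss1D at hbetter
  rcases le_total a (2 * t - c) with h | h
  · rw [max_eq_right h] at hbetter
    nlinarith
  · rw [max_eq_left h] at hbetter
    nlinarith

lemma eq_right_of_isMinOn_loss1D_of_lt (hx : x ∈ Icc a b)
    (hmin : IsMinOn (loss1D t · c) (Icc a b) x) (ht : (x + c) / 2 < t) : x = b := by
  by_contra hxb
  have hxb : x < b := lt_of_le_of_ne hx.2 hxb
  have hbetter : loss1D t x c ≤ loss1D t (min b (2 * t - c)) c :=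
    isMinOn_iff.1 hmin _ ⟨le_min (by linarith [hx.1]) (by linarith [hx.1]), min_le_left _ _⟩
  unfold loss1D at hbetter
  rcases le_total b (2 * t - c) with h | h
  · rw [min_eq_left h] at hbetter
    nlinarith
  · rw [min_eq_right h] at hbetter
    nlinarith

end BestResponse

theorem same_side_targets_unique_pNE_general (a b t1 t2 : ℝ)
    (ht12 : t1 < t2) (hat2 : a < t2) (ht2 : t2 < (a + b) / 2) :
    IsPureNE1D a b t1 t2 a (2 * t2 - a) ∧
      (∀ x1 x2 : ℝ, IsPureNE1D a b t1 t2 x1 x2 → x1 = a ∧ x2 = 2 * t2 - a) ∧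
      (a + (2 * t2 - a)) / 2 = t2 := by
  have hreceiver : (a + (2 * t2 - a)) / 2 = t2 := by ring
  refine ⟨⟨⟨le_rfl, by linarith⟩, ⟨by linarith, by linarith⟩, ?_, ?_⟩, ?_, hreceiver⟩
  · exact fun y hy => loss1D_le_loss1D_of_le (by linarith) hy.1
  · intro y _
    rw [loss1D, hreceiver, sub_self]
    exact (zero_pow two_ne_zero).trans_le (sq_nonneg _)
  · rintro x1 x2 ⟨hx1, hx2, h1, h2⟩
    simp only [loss1D_comm t2 x1] at h2
    replace h1 : IsMinOn (loss1D t1 · x2) (Icc a b) x1 := isMinOn_iff.2 h1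
    replace h2 : IsMinOn (loss1D t2 · x1) (Icc a b) x2 := isMinOn_iff.2 h2
    have hs : (x1 + x2) / 2 = t2 := by
      rcases lt_trichotomy ((x1 + x2) / 2) t2 with hlt | heq | hgt
      · have hx2b := eq_right_of_isMinOn_loss1D_of_lt hx2 h2 (by linarith)
        linarith [hx1.1]
      · exact heq
      · have hx2a := eq_left_of_isMinOn_loss1D_of_lt hx2 h2 (by linarith)
        have hx1a := eq_left_of_isMinOn_loss1D_of_lt hx1 h1 (by linarith)
        linarith
    have hx1a := eq_left_of_isMinOn_loss1D_of_lt hx1 h1 (by linarith)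
    exact ⟨hx1a, by linarith⟩

/-- With `a < b`, `t₁ < t₂`, `a < t₂ < (a+b)/2`, the pair `(a, 2t₂ − a)` is the
unique pure Nash equilibrium of the two-player one-dimensional Battling
Influencers Game, and at this equilibrium the receiver ends at player 2's
target: `(x₁ + x₂)/2 = t₂`. -/
theorem same_side_targets_unique_pNE (a b t1 t2 : ℝ) (hab : a < b)
    (ht12 : t1 < t2) (hat2 : a < t2) (ht2 : t2 < (a + b) / 2) :
    IsPureNE1D a b t1 t2 a (2 * t2 - a) ∧
      (∀ x1 x2 : ℝ, IsPureNE1D a b t1 t2 x1 x2 → x1 = a ∧ x2 = 2 * t2 - a) ∧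
      (a + (2 * t2 - a)) / 2 = t2 :=
  same_side_targets_unique_pNE_general a b t1 t2 ht12 hat2 ht2

end
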